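/- Let f : P₂(ℝ^d) → ℝ be second-order regularly differentiable with linear functional derivatives δf/δμ and δ²f/δμ², and suppose f is empirically harmonic in the sense that for every N ≥ 1 and every (x₁,…,x_N) ∈ (ℝ^d)^N, with μ_x^N = (1/N)∑_{i=1}^N δ_{x_i}, one has ∑_{i=1}^N [ (1/N) Δ_x (δf/δμ)(μ_x^N)(x_i) + (1/N²) Δ_{x,x̃} (δ²f/δμ²)(μ_x^N)(x_i, x_i) ] = 0. Then for every y ∈ ℝ^d: (i) Δ_x (δf/δμ)(δ_y)(y) = 0, and (ii) Δ_{x,x̃} (δ²f/δμ²)(δ_y)(y,y) = 0. -/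

import Mathlib

open MeasureTheory ENNReal

noncomputable section

/-- `ℝ^d` as Euclidean space. -/
abbrev Ed (d : ℕ) := EuclideanSpace ℝ (Fin d)

/-- `π` is a coupling of `μ` and `ν`. -/
def IsCoupling {d : ℕ} (π : Measure (Ed d × Ed d)) (μ ν : Measure (Ed d)) : Prop :=
  IsProbabilityMeasure π ∧ π.map Prod.fst = μ ∧ π.map Prod.snd = ν

/-- Squared quadratic Wasserstein distance. -/
noncomputable def W2sq {d : ℕ} (μ ν : Measure (Ed d)) : ℝ≥0∞ :=
  ⨅ π ∈ {π : Measure (Ed d × Ed d) | IsCoupling π μ ν},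
    ∫⁻ p, ENNReal.ofReal (‖p.1 - p.2‖ ^ 2) ∂π

/-- The quadratic Wasserstein distance. -/
noncomputable def W2 {d : ℕ} (μ ν : Measure (Ed d)) : ℝ :=
  Real.sqrt (W2sq μ ν).toReal

/-- Membership in `P₂(ℝ^d)`. -/
def MemP2 {d : ℕ} (μ : Measure (Ed d)) : Prop :=
  IsProbabilityMeasure μ ∧ (∫⁻ x, ENNReal.ofReal (‖x‖ ^ 2) ∂μ) < ⊤

/-- The Wasserstein space `P₂(ℝ^d)`. -/
def P2 (d : ℕ) := {μ : Measure (Ed d) // MemP2 μ}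

/-- The `W₂`-topology on `P₂(ℝ^d)`, generated by the open `W₂`-balls. -/
instance (d : ℕ) : TopologicalSpace (P2 d) :=
  TopologicalSpace.generateFrom
    {s | ∃ (μ : P2 d) (r : ℝ), s = {ν : P2 d | W2 μ.1 ν.1 < r}}

/-- A `W₂`-bounded subset of `P₂(ℝ^d)`. -/
def P2Bounded {d : ℕ} (s : Set (P2 d)) : Prop :=
  ∃ (μ : P2 d) (r : ℝ), ∀ ν ∈ s, W2 μ.1 ν.1 ≤ r

/-- The empirical map `ι_N(x₁,…,x_N) = (1/N) ∑ δ_{x_i}`. -/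
noncomputable def emp (d N : ℕ) (x : Fin N → Ed d) : Measure (Ed d) :=
  ((N : ℝ≥0∞)⁻¹) • ∑ i, Measure.dirac (x i)

/-- The interpolation `θν₁ + (1-θ)ν₂`. -/
noncomputable def mixM {d : ℕ} (θ : ℝ) (ν₁ ν₂ : Measure (Ed d)) : Measure (Ed d) :=
  ENNReal.ofReal θ • ν₁ + ENNReal.ofReal (1 - θ) • ν₂

/-- `∬ g(x, x̃) d(ν₁-ν₂)(x) d(ν₁-ν₂)(x̃)`, expanded as a signed combination of
double integrals. -/
noncomputable def diffInt2 {d : ℕ} (g : Ed d → Ed d → ℝ) (ν₁ ν₂ : Measure (Ed d)) : ℝ :=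
  (∫ x', (∫ x, g x x' ∂ν₁) ∂ν₁) - (∫ x', (∫ x, g x x' ∂ν₁) ∂ν₂)
    - (∫ x', (∫ x, g x x' ∂ν₂) ∂ν₁) + (∫ x', (∫ x, g x x' ∂ν₂) ∂ν₂)

/-- Second directional derivative `∂_v ∂_w g` of `g : ℝ^d → ℝ`. -/
noncomputable def sderiv {d : ℕ} (g : Ed d → ℝ) (x v w : Ed d) : ℝ :=
  fderiv ℝ (fun a => fderiv ℝ g a w) x v

/-- Mixed second directional derivative `∂_{x,v} ∂_{x̃,w} g` of `g : ℝ^d × ℝ^d → ℝ`. -/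
noncomputable def mderiv {d : ℕ} (g : Ed d → Ed d → ℝ) (x x' v w : Ed d) : ℝ :=
  fderiv ℝ (fun a => fderiv ℝ (g a) x' w) x v

/-- `Δ_x g(x) = ∑_j ∂²g/∂x_j²`. -/
noncomputable def lapX {d : ℕ} (g : Ed d → ℝ) (x : Ed d) : ℝ :=
  ∑ j, sderiv g x (EuclideanSpace.single j 1) (EuclideanSpace.single j 1)

/-- The mixed Laplacian `Δ_{x,x̃} g = ∑_j ∂_{x_j} ∂_{x̃_j} g`. -/
noncomputable def lapMix {d : ℕ} (g : Ed d → Ed d → ℝ) (x x' : Ed d) : ℝ :=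
  ∑ j, mderiv g x x' (EuclideanSpace.single j 1) (EuclideanSpace.single j 1)

/-- `f : P₂(ℝ^d) → ℝ` is second-order regularly differentiable with first-order linear
functional derivative `F1 = δf/δμ` and second-order linear functional derivative
`F2 = δ²f/δμ²`. -/
structure SecondOrderRegDiff (d : ℕ) (f : Measure (Ed d) → ℝ)
    (F1 : Measure (Ed d) → Ed d → ℝ)
    (F2 : Measure (Ed d) → Ed d → Ed d → ℝ) : Prop where
  /-- `δf/δμ` is jointly continuous on `P₂(ℝ^d) × ℝ^d`. -/
  cont1 : Continuous fun p : P2 d × Ed d => F1 p.1.1 p.2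
  /-- Quadratic growth of `δf/δμ`, with constant bounded on `W₂`-bounded sets. -/
  growth1 : ∃ c : Measure (Ed d) → ℝ,
    (∀ s : Set (P2 d), P2Bounded s → ∃ C : ℝ, ∀ μ ∈ s, c μ.1 ≤ C) ∧
    ∀ μ : P2 d, ∀ x : Ed d, |F1 μ.1 x| ≤ c μ.1 * (1 + ‖x‖ ^ 2)
  /-- First-order fundamental identity:
  `f(ν₁) - f(ν₂) = ∫₀¹ ∫ δf/δμ(θν₁+(1-θ)ν₂)(x) d(ν₁-ν₂)(x) dθ`. -/
  fund1 : ∀ ν₁ ν₂ : P2 d,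
    f ν₁.1 - f ν₂.1 = ∫ θ in (0:ℝ)..1,
      ((∫ x, F1 (mixM θ ν₁.1 ν₂.1) x ∂ν₁.1) - ∫ x, F1 (mixM θ ν₁.1 ν₂.1) x ∂ν₂.1)
  /-- Normalization: `∫ δf/δμ(μ)(x) dμ(x) = 0`. -/
  norm1 : ∀ μ : P2 d, (∫ x, F1 μ.1 x ∂μ.1) = 0
  /-- `δ²f/δμ²` is jointly continuous on `P₂(ℝ^d) × ℝ^d × ℝ^d`. -/
  cont2 : Continuous fun p : P2 d × Ed d × Ed d => F2 p.1.1 p.2.1 p.2.2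
  /-- Quadratic growth of `δ²f/δμ²`, with constant bounded on `W₂`-bounded sets. -/
  growth2 : ∃ c : Measure (Ed d) → ℝ,
    (∀ s : Set (P2 d), P2Bounded s → ∃ C : ℝ, ∀ μ ∈ s, c μ.1 ≤ C) ∧
    ∀ μ : P2 d, ∀ x x' : Ed d, |F2 μ.1 x x'| ≤ c μ.1 * (1 + ‖x‖ ^ 2 + ‖x'‖ ^ 2)
  /-- Second-order fundamental identity. -/
  fund2 : ∀ ν₁ ν₂ : P2 d,
    f ν₁.1 - f ν₂.1 - ((∫ x, F1 ν₂.1 x ∂ν₁.1) - ∫ x, F1 ν₂.1 x ∂ν₂.1)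
      = ∫ θ in (0:ℝ)..1, ∫ l in (0:ℝ)..1,
          θ * diffInt2 (F2 (mixM (l * θ) ν₁.1 ν₂.1)) ν₁.1 ν₂.1
  /-- Normalization in the second variable. -/
  norm2a : ∀ μ : P2 d, ∀ x : Ed d, (∫ x', F2 μ.1 x x' ∂μ.1) = 0
  /-- Normalization in the first variable. -/
  norm2b : ∀ μ : P2 d, ∀ x' : Ed d, (∫ x, F2 μ.1 x x' ∂μ.1) = 0
  /-- Existence of second derivatives `∇_x∇_x δf/δμ`. -/
  smooth1 : ∀ μ : P2 d, ContDiff ℝ 2 (F1 μ.1)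
  /-- Existence of second derivatives of `δ²f/δμ²`, in particular `∇_x∇_x̃ δ²f/δμ²`. -/
  smooth2 : ∀ μ : P2 d, ContDiff ℝ 2 fun p : Ed d × Ed d => F2 μ.1 p.1 p.2
  /-- Joint continuity of `∇_x∇_x δf/δμ`. -/
  contD1 : ∀ v w : Ed d, Continuous fun p : P2 d × Ed d => sderiv (F1 p.1.1) p.2 v w
  /-- Joint continuity of `∇_x∇_x̃ δ²f/δμ²`. -/
  contD2 : ∀ v w : Ed d,
    Continuous fun p : P2 d × Ed d × Ed d => mderiv (F2 p.1.1) p.2.1 p.2.2 v w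
  /-- Boundedness of the second derivatives on `W₂`-bounded sets. -/
  bddD : ∀ s : Set (P2 d), P2Bounded s → ∃ C : ℝ, ∀ μ ∈ s, ∀ x x' v w : Ed d,
    |sderiv (F1 μ.1) x v w| + |mderiv (F2 μ.1) x x' v w| ≤ C * ‖v‖ * ‖w‖

/-! At the constant configuration `xᵢ = y` the empirical measure is `δ_y` for every `N`, so
empirical harmonicity reads `Δ_x (δf/δμ)(δ_y)(y) + Δ_{x,x̃} (δ²f/δμ²)(δ_y)(y,y) / N = 0` for all
`N ≥ 1`; the cases `N = 1` and `N = 2` force both terms to vanish. -/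

theorem emp_const {d N : ℕ} (hN : N ≠ 0) (y : Ed d) : emp d N (fun _ => y) = Measure.dirac y := by
  have hN' : (N : ℝ≥0∞) ≠ 0 := by exact_mod_cast hN
  rw [emp, Finset.sum_const, Finset.card_univ, Fintype.card_fin, ← Nat.cast_smul_eq_nsmul ℝ≥0∞,
    smul_smul, ENNReal.inv_mul_cancel hN' (ENNReal.natCast_ne_top N), one_smul]

theorem empirically_harmonic_necessary_conditions_general (d : ℕ)
    (F1 : Measure (Ed d) → Ed d → ℝ)
    (F2 : Measure (Ed d) → Ed d → Ed d → ℝ)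
    (hEH : ∀ N : ℕ, 1 ≤ N → ∀ x : Fin N → Ed d,
      ∑ i, ((N : ℝ)⁻¹ * lapX (F1 (emp d N x)) (x i)
        + ((N : ℝ) ^ 2)⁻¹ * lapMix (F2 (emp d N x)) (x i) (x i)) = 0) :
    ∀ y : Ed d,
      lapX (F1 (Measure.dirac y)) y = 0 ∧
      lapMix (F2 (Measure.dirac y)) y y = 0 := by
  intro y
  have hconst : ∀ N : ℕ, 1 ≤ N →
      lapX (F1 (Measure.dirac y)) y + lapMix (F2 (Measure.dirac y)) y y / N = 0 := by
    intro N hN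
    have h := hEH N hN (fun _ => y)
    have hN' : (N : ℝ) ≠ 0 := by positivity
    rw [emp_const (by omega), Finset.sum_const, Finset.card_univ, Fintype.card_fin,
      nsmul_eq_mul] at h
    rw [← h]
    field_simp
  have h1 := hconst 1 le_rfl
  have h2 := hconst 2 one_le_two
  norm_num at h1 h2
  constructor <;> linarith

/-- Necessary conditions for empirical harmonicity: if `f` is second-order regularly
differentiable and empirically harmonic, i.e. for every `N ≥ 1` and `x ∈ (ℝ^d)^N`
`∑ᵢ [(1/N) Δ_x (δf/δμ)(μ_x^N)(xᵢ) + (1/N²) Δ_{x,x̃} (δ²f/δμ²)(μ_x^N)(xᵢ,xᵢ)] = 0`,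
then at every Dirac mass `δ_y` one has `Δ_x (δf/δμ)(δ_y)(y) = 0` and
`Δ_{x,x̃} (δ²f/δμ²)(δ_y)(y,y) = 0`. -/
theorem empirically_harmonic_necessary_conditions (d : ℕ)
    (f : Measure (Ed d) → ℝ)
    (F1 : Measure (Ed d) → Ed d → ℝ)
    (F2 : Measure (Ed d) → Ed d → Ed d → ℝ)
    (hreg : SecondOrderRegDiff d f F1 F2)
    (hEH : ∀ N : ℕ, 1 ≤ N → ∀ x : Fin N → Ed d,
      ∑ i, ((N : ℝ)⁻¹ * lapX (F1 (emp d N x)) (x i)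
        + ((N : ℝ) ^ 2)⁻¹ * lapMix (F2 (emp d N x)) (x i) (x i)) = 0) :
    ∀ y : Ed d,
      lapX (F1 (Measure.dirac y)) y = 0 ∧
      lapMix (F2 (Measure.dirac y)) y y = 0 :=
  empirically_harmonic_necessary_conditions_general d F1 F2 hEH

end
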